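/- arXiv:2506.21779 — 4 statements merged into one kernel-verified Lean document; each statement's English description precedes it below -/
import Mathlib

section
/- Let 0 < R' < R''. Suppose φ : ℝ² → ℝ is smooth, not identically zero, with support contained in the closed ball B(0,R'). Then there exist smooth functions r₁, r₂ : ℝ² → ℝ with supports contained in B(0,R'') such that the 2×2 matrix whose (i,j) entry is ∫_{ℝ²} 2 r_j(x) ∂_i φ(x) dx (for i,j ∈ {1,2}) has nonzero determinant. -/
open MeasureTheory

-- auxiliary lemma: if the directional derivative of a compactly supported function
-- vanishes everywhere in a nonzero direction, the function is zero.
lemma dir_deriv_zero (R' : ℝ) (φ : EuclideanSpace ℝ (Fin 2) → ℝ)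
    (hφ : ContDiff ℝ (⊤ : ℕ∞) φ)
    (hR' : 0 ≤ R')
    (hsupp : tsupport φ ⊆ Metric.closedBall 0 R')
    (v : EuclideanSpace ℝ (Fin 2)) (hv : v ≠ 0)
    (h : ∀ x, fderiv ℝ φ x v = 0) : φ = 0 := by
  funext x
  set g : ℝ → ℝ := fun t => φ (x + t • v) with hg
  have hgd : ∀ t : ℝ, HasDerivAt g 0 t := by
    intro t
    have h1 : HasDerivAt (fun t : ℝ => x + t • v) v t := by
      simpa using ((hasDerivAt_id t).smul_const v).const_add x
    have h2 : HasFDerivAt φ (fderiv ℝ φ (x + t • v)) (x + t • v) :=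
      (hφ.differentiable (by simp) (x + t • v)).hasFDerivAt
    have := h2.comp_hasDerivAt t h1
    rw [h] at this; exact this
  have hvpos : 0 < ‖v‖ := norm_pos_iff.mpr hv
  set T : ℝ := (R' + ‖x‖ + 1) / ‖v‖ with hT
  have hnum : (0:ℝ) ≤ R' + ‖x‖ + 1 := by
    have := norm_nonneg x; linarith
  have hTnn : 0 ≤ T := div_nonneg hnum hvpos.le
  have hnorm : R' < ‖x + T • v‖ := by
    have h1 : ‖T • v‖ ≤ ‖x + T • v‖ + ‖x‖ := by
      have := norm_add_le (x + T • v) (-x)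
      simpa [add_assoc] using this
    have h2 : ‖T • v‖ = R' + ‖x‖ + 1 := by
      rw [norm_smul, Real.norm_eq_abs, abs_of_nonneg hTnn, hT]
      field_simp
    have hx0 : 0 ≤ ‖x‖ := norm_nonneg x
    nlinarith
  have hnot : x + T • v ∉ tsupport φ := by
    intro hmem
    have := hsupp hmem
    simp only [Metric.mem_closedBall, dist_zero_right] at this
    linarith
  have hzero : g T = 0 := by
    have : φ (x + T • v) = 0 := image_eq_zero_of_notMem_tsupport hnot
    simpa [hg] using this
  have hconst : g 0 = g T :=
    is_const_of_deriv_eq_zero (fun t => (hgd t).differentiableAt)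
      (fun t => (hgd t).deriv) 0 T
  have : φ x = 0 := by
    have : g 0 = 0 := hconst.trans hzero
    simpa [hg] using this
  exact this

/-- Given a smooth, not identically zero `φ` supported in the closed ball of radius `R'`,
there are smooth `r₁, r₂` supported in the closed ball of radius `R''` such that the
matrix with entries `∫ 2 r_j ∂_i φ` has nonzero determinant. -/
theorem stmt1 (R' R'' : ℝ) (hR'pos : 0 < R') (hRR : R' < R'')
    (φ : EuclideanSpace ℝ (Fin 2) → ℝ) (hφ : ContDiff ℝ (⊤ : ℕ∞) φ) (hφne : φ ≠ 0)
    (hsupp : tsupport φ ⊆ Metric.closedBall 0 R') :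
    ∃ r : Fin 2 → EuclideanSpace ℝ (Fin 2) → ℝ,
      (∀ j, ContDiff ℝ (⊤ : ℕ∞) (r j)) ∧
      (∀ j, tsupport (r j) ⊆ Metric.closedBall 0 R'') ∧
      Matrix.det (Matrix.of fun i j : Fin 2 =>
        ∫ x, 2 * r j x * fderiv ℝ φ x (EuclideanSpace.single i 1)) ≠ 0 := by
  classical
  set f : Fin 2 → EuclideanSpace ℝ (Fin 2) → ℝ := fun i (x : EuclideanSpace ℝ (Fin 2)) => fderiv ℝ φ x (EuclideanSpace.single i 1) with hf
  -- smoothness of f i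
  have hfderiv : ContDiff ℝ (⊤ : ℕ∞) (fderiv ℝ φ) := hφ.fderiv_right (le_of_eq ENat.coe_top_add_one)
  have hfsmooth : ∀ i, ContDiff ℝ (⊤ : ℕ∞) (f i) := fun i =>
    hfderiv.clm_apply contDiff_const
  have hfcont : ∀ i, Continuous (f i) := fun i => (hfsmooth i).continuous
  -- supports
  have hfsupp : ∀ i, tsupport (f i) ⊆ tsupport φ := by
    intro i
    apply closure_minimal _ isClosed_closure
    intro x hx
    by_contra hmem
    have : fderiv ℝ φ x = 0 := (HasFDerivAt.of_notMem_tsupport ℝ hmem).fderiv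
    exact hx (by simp [hf, this])
  have hball : Metric.closedBall (0 : EuclideanSpace ℝ (Fin 2)) R' ⊆ Metric.closedBall 0 R'' :=
    Metric.closedBall_subset_closedBall hRR.le
  have hfsupp'' : ∀ i, tsupport (f i) ⊆ Metric.closedBall 0 R'' := fun i =>
    ((hfsupp i).trans hsupp).trans hball
  -- compact supports and integrability
  have hcs : ∀ i, HasCompactSupport (f i) := fun i =>
    HasCompactSupport.of_support_subset_isCompact (isCompact_closedBall 0 R'')
      ((subset_closure).trans (hfsupp'' i))
  have hInt : ∀ i j : Fin 2, Integrable (fun x => f i x * f j x) := fun i j =>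
    ((hfcont i).mul (hfcont j)).integrable_of_hasCompactSupport ((hcs i).mul_right)
  -- abbreviations
  set A : ℝ := ∫ x, f 0 x * f 0 x with hA
  set B : ℝ := ∫ x, f 0 x * f 1 x with hB
  set C : ℝ := ∫ x, f 1 x * f 1 x with hC
  -- f i not identically zero
  have hfne : ∀ i, f i ≠ 0 := by
    intro i hzero
    apply hφne
    refine dir_deriv_zero R' φ hφ hR'pos.le hsupp (EuclideanSpace.single i 1) ?_ ?_
    · intro h
      have := congrArg (· i) h
      simp at this
    · intro x
      have := congrFun hzero x
      simpa [hf] using this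
  -- positivity of squares' integrals
  have hsqpos : ∀ i, 0 < ∫ x, f i x * f i x := by
    intro i
    refine (integral_pos_iff_support_of_nonneg (fun x => mul_self_nonneg _) (hInt i i)).mpr ?_
    have : Function.support (fun x => f i x * f i x) = Function.support (f i) := by
      ext x; simp [Function.mem_support, mul_self_eq_zero]
    rw [this]
    have hopen : IsOpen (Function.support (f i)) := (hfcont i).isOpen_support
    have hne : (Function.support (f i)).Nonempty := by
      rcases Function.ne_iff.mp (hfne i) with ⟨x, hx⟩
      exact ⟨x, hx⟩
    exact hopen.measure_pos volume hne
  have hCpos : 0 < C := hsqpos 1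
  have hApos : 0 < A := hsqpos 0
  -- key: A*C - B^2 ≠ 0
  have hkey : A * C - B * B ≠ 0 := by
    intro heq
    set c : ℝ := B / C with hc
    have hh : ∀ x, f 0 x - c * f 1 x = 0 := by
      have hint : (∫ x, (f 0 x - c * f 1 x) * (f 0 x - c * f 1 x)) = 0 := by
        have expand : ∀ x, (f 0 x - c * f 1 x) * (f 0 x - c * f 1 x)
            = f 0 x * f 0 x - (2 * c) * (f 0 x * f 1 x) + (c * c) * (f 1 x * f 1 x) := by
          intro x; ring
        rw [integral_congr_ae (Filter.Eventually.of_forall expand)]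
        have I1 : Integrable (fun x => f 0 x * f 0 x - 2 * c * (f 0 x * f 1 x)) volume :=
          (hInt 0 0).sub ((hInt 0 1).const_mul _)
        have I2 : Integrable (fun x => c * c * (f 1 x * f 1 x)) volume :=
          (hInt 1 1).const_mul _
        have h1 := integral_add I1 I2
        have h2 := integral_sub (hInt 0 0) ((hInt 0 1).const_mul (2 * c))
        have h3 := integral_const_mul (μ := volume) (2 * c) (fun x => f 0 x * f 1 x)
        have h4 := integral_const_mul (μ := volume) (c * c) (fun x => f 1 x * f 1 x)
        rw [h1, h2, h3, h4, ← hA, ← hB, ← hC, hc]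
        field_simp
        nlinarith
      have hcont : Continuous (fun x => (f 0 x - c * f 1 x) * (f 0 x - c * f 1 x)) :=
        ((hfcont 0).sub (continuous_const.mul (hfcont 1))).mul
          ((hfcont 0).sub (continuous_const.mul (hfcont 1)))
      have hintc : Integrable (fun x => (f 0 x - c * f 1 x) * (f 0 x - c * f 1 x)) := by
        have : (fun x => (f 0 x - c * f 1 x) * (f 0 x - c * f 1 x))
            = fun x => f 0 x * f 0 x - (2 * c) * (f 0 x * f 1 x) + (c * c) * (f 1 x * f 1 x) := by
          funext x; ring
        rw [this]
        exact ((hInt 0 0).sub ((hInt 0 1).const_mul _)).add ((hInt 1 1).const_mul _)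
      have hae := (integral_eq_zero_iff_of_nonneg (fun x => mul_self_nonneg _) hintc).mp hint
      have heqfun : (fun x => (f 0 x - c * f 1 x) * (f 0 x - c * f 1 x)) = (0 : EuclideanSpace ℝ (Fin 2) → ℝ) :=
        (hcont.ae_eq_iff_eq volume continuous_const).mp hae
      intro x
      have := congrFun heqfun x
      simpa [mul_self_eq_zero] using this
    -- so the directional derivative in direction e0 - c • e1 vanishes
    set v : EuclideanSpace ℝ (Fin 2) := EuclideanSpace.single 0 1 - c • EuclideanSpace.single 1 1 with hv
    have hvne : v ≠ 0 := by
      intro h0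
      have := congrArg (· 0) h0
      simp [hv] at this
    have hdz : ∀ x, fderiv ℝ φ x v = 0 := by
      intro x
      have := hh x
      simpa [hv, map_sub, _root_.map_smul, smul_eq_mul, hf] using this
    exact hφne (dir_deriv_zero R' φ hφ hR'pos.le hsupp v hvne hdz)
  refine ⟨f, hfsmooth, hfsupp'', ?_⟩
  have hM : ∀ i j : Fin 2, (∫ x, 2 * f j x * f i x) = 2 * ∫ x, f j x * f i x := by
    intro i j
    rw [← integral_const_mul]
    congr 1; funext x; ring
  rw [Matrix.det_fin_two]
  simp only [Matrix.of_apply]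
  have h00 : (∫ x, 2 * f 0 x * f 0 x) = 2 * A := hM 0 0
  have h11 : (∫ x, 2 * f 1 x * f 1 x) = 2 * C := hM 1 1
  have h01 : (∫ x, 2 * f 1 x * f 0 x) = 2 * ∫ x, f 1 x * f 0 x := hM 0 1
  have h10 : (∫ x, 2 * f 0 x * f 1 x) = 2 * B := hM 1 0
  have hsymm : (∫ x, f 1 x * f 0 x) = B := by
    rw [hB]; congr 1; funext x; ring
  show (∫ x, 2 * f 0 x * f 0 x) * (∫ x, 2 * f 1 x * f 1 x)
      - (∫ x, 2 * f 1 x * f 0 x) * (∫ x, 2 * f 0 x * f 1 x) ≠ 0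
  rw [h00, h11, h01, h10, hsymm]
  intro h
  apply hkey
  nlinarith
end

section
/- Let R ≥ 10. Let φ, ϖ, φ̇, ϖ̇ : ℝ² → ℝ be smooth functions supported in the ball B(0,R), and let f̆ : ℝ² × S¹ → ℝ be smooth with x-support contained in B(0,R). Let m be a Borel probability measure on S¹ = ℝ/2πℤ, and write e₁(ω) = cos ω, e₂(ω) = sin ω. Assume the orthogonality condition: for j = 1,2, ∫_{ℝ²} ( 2 φ̇ ∂_jφ + (1/2) e^{−4φ} ϖ̇ ∂_jϖ + ∫_{S¹} f̆(x,ω)² e_j(ω) dm(ω) ) dx = 0. Let r₁, r₂ : ℝ² → ℝ be smooth, supported in B(0, 3R/2), such that the 2×2 matrix whose (i,j) entry is ∫_{ℝ²} 2 r_j ∂_i φ dx has nonzero determinant. For each positive integer N set ω_A^{(N)} = 2πA/N and α_A^{(N)} = m([2πA/N, 2π(A+1)/N)) for A ∈ {0,…,N−1}. Then there exist real sequences Ω₁^N, Ω₂^N with (Ω₁^N, Ω₂^N) → (0,0) as N → ∞ such that for every N and for j = 1,2: ∫_{ℝ²} ( 2 (φ̇ + Ω₁^N r₁ + Ω₂^N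 r₂) ∂_jφ + (1/2) e^{−4φ} ϖ̇ ∂_jϖ + Σ_{A=0}^{N−1} α_A^{(N)} f̆(x, ω_A^{(N)})² e_j(ω_A^{(N)}) ) dx = 0. -/
open MeasureTheory Filter Topology

noncomputable section

instance : Fact (0 < 2 * Real.pi) := ⟨by have := Real.pi_pos; linarith⟩

abbrev E2 := EuclideanSpace ℝ (Fin 2)

/-- The direction functions `e₁(ω) = cos ω`, `e₂(ω) = sin ω` on the circle `ℝ/2πℤ`. -/
def eDir : Fin 2 → AddCircle (2 * Real.pi) → ℝ :=
  fun j ω => if j = 0 then Real.Angle.cos ω else Real.Angle.sin ω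

/-- `α_A^{(N)} = m([2πA/N, 2π(A+1)/N))`. -/
def alphaCoef (m : Measure (AddCircle (2 * Real.pi))) (N A : ℕ) : ℝ :=
  (m ((fun x : ℝ => (x : AddCircle (2 * Real.pi))) ''
      Set.Ico (2 * Real.pi * A / N) (2 * Real.pi * (A + 1) / N))).toReal

/-- `ω_A^{(N)} = 2πA/N` as a point of the circle. -/
def omegaPt (N A : ℕ) : AddCircle (2 * Real.pi) :=
  ((2 * Real.pi * A / N : ℝ) : AddCircle (2 * Real.pi))

namespace StmtAux

open Set

/-- The canonical lift of the circle to `[0, 2π)`. -/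
def Tlift : AddCircle (2 * Real.pi) → ℝ :=
  fun ω => ((AddCircle.equivIco (2 * Real.pi) 0 ω : Ico (0:ℝ) (0 + 2 * Real.pi)) : ℝ)

lemma Tlift_measurable : Measurable Tlift :=
  measurable_subtype_coe.comp (AddCircle.measurableEquivIco (2 * Real.pi) 0).measurable

lemma Tlift_mem (ω : AddCircle (2 * Real.pi)) : Tlift ω ∈ Ico (0:ℝ) (2 * Real.pi) := by
  have := (AddCircle.equivIco (2 * Real.pi) 0 ω).2
  simpa [Tlift] using this

lemma Tlift_coe (ω : AddCircle (2 * Real.pi)) : ((Tlift ω : ℝ) : AddCircle (2 * Real.pi)) = ω :=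
  (AddCircle.equivIco (2 * Real.pi) 0).symm_apply_apply ω

lemma Tlift_val {θ : ℝ} (hθ : θ ∈ Ico (0:ℝ) (0 + 2 * Real.pi)) :
    Tlift ((θ : ℝ) : AddCircle (2 * Real.pi)) = θ := by
  have : AddCircle.equivIco (2 * Real.pi) 0 ((θ : ℝ) : AddCircle (2 * Real.pi)) = ⟨θ, hθ⟩ := by
    rw [Equiv.apply_eq_iff_eq_symm_apply]; rfl
  simp [Tlift, this]

lemma image_Ico_eq {a b : ℝ} (ha : 0 ≤ a) (hb : b ≤ 2 * Real.pi) :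
    (fun x : ℝ => (x : AddCircle (2 * Real.pi))) '' Ico a b = Tlift ⁻¹' Ico a b := by
  ext ω
  constructor
  · rintro ⟨θ, hθ, rfl⟩
    have h0 : θ ∈ Ico (0:ℝ) (0 + 2 * Real.pi) := by
      constructor
      · linarith [hθ.1]
      · simpa using lt_of_lt_of_le hθ.2 hb
    simpa [Set.mem_preimage, Tlift_val h0] using hθ
  · intro hω
    exact ⟨Tlift ω, hω, Tlift_coe ω⟩

lemma integral_circle_eq (m : Measure (AddCircle (2 * Real.pi))) [IsProbabilityMeasure m]
    (G : AddCircle (2 * Real.pi) → ℝ)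
    (hG : Continuous fun θ : ℝ => G ((θ : ℝ) : AddCircle (2 * Real.pi))) :
    ∫ ω, G ω ∂m = ∫ θ, G ((θ : ℝ) : AddCircle (2 * Real.pi)) ∂(m.map Tlift) := by
  rw [integral_map Tlift_measurable.aemeasurable (hG.aestronglyMeasurable)]
  congr 1
  ext ω
  rw [Tlift_coe]

lemma map_compl_Ico (m : Measure (AddCircle (2 * Real.pi))) :
    (m.map Tlift) (Ico (0:ℝ) (2 * Real.pi))ᶜ = 0 := by
  rw [Measure.map_apply Tlift_measurable measurableSet_Ico.compl]
  have h : Tlift ⁻¹' (Ico (0:ℝ) (2 * Real.pi))ᶜ = ∅ := by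
    ext ω; simp [Tlift_mem ω]
  rw [h, measure_empty]

lemma eDir_coe (j : Fin 2) (θ : ℝ) :
    eDir j ((θ : ℝ) : AddCircle (2 * Real.pi)) = if j = 0 then Real.cos θ else Real.sin θ := by
  unfold eDir
  by_cases h : j = 0
  · simp only [h, if_true]; exact Real.Angle.cos_coe θ
  · simp only [h, if_false]; exact Real.Angle.sin_coe θ

lemma iUnion_Ico_nat (c : ℝ) (hc : 0 ≤ c) (N : ℕ) :
    ⋃ A ∈ Finset.range N, Ico (c * A) (c * (A + 1 : ℕ)) = Ico 0 (c * N) := by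
  induction N with
  | zero => simp
  | succ n ih =>
    rw [Finset.range_add_one]
    rw [Finset.set_biUnion_insert, ih, Set.union_comm,
      Set.Ico_union_Ico_eq_Ico (by positivity)
        (mul_le_mul_of_nonneg_left (by push_cast; linarith) hc)]

lemma pairwise_disjoint_Ico (c : ℝ) (hc : 0 ≤ c) :
    Pairwise (Function.onFun Disjoint fun A : ℕ => Ico (c * A) (c * (A + 1 : ℕ))) := by
  intro A B hAB
  have key : ∀ {A B : ℕ}, A < B →
      Disjoint (Ico (c * A) (c * (A + 1 : ℕ))) (Ico (c * B) (c * (B + 1 : ℕ))) := by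
    intro A B hlt
    refine Set.Ico_disjoint_Ico.mpr ?_
    have h1 : c * (A + 1 : ℕ) ≤ c * B := by
      apply mul_le_mul_of_nonneg_left _ hc
      exact_mod_cast Nat.succ_le_of_lt hlt
    exact le_trans (min_le_left _ _) (le_trans h1 (le_max_right _ _))
  rcases lt_or_gt_of_ne hAB with hlt | hlt
  · exact key hlt
  · exact (key hlt).symm

lemma integrable_of_csupport {f : E2 → ℝ} (hf : Continuous f) {ρ : ℝ}
    (hρ : ∀ x : E2, x ∉ Metric.closedBall 0 ρ → f x = 0) : Integrable f :=
  hf.integrable_of_hasCompactSupport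
    (HasCompactSupport.intro (isCompact_closedBall _ _) hρ)

end StmtAux

/-- Solvability of the (discretized) constraint: there are `Ω₁^N, Ω₂^N → 0` making the
orthogonality condition hold for the `N`-dust discretization of the Vlasov data. -/
theorem stmt2
    (R : ℝ) (hR : 10 ≤ R)
    (φ ϖ φd ϖd : E2 → ℝ)
    (hφ : ContDiff ℝ (⊤ : ℕ∞) φ) (hϖ : ContDiff ℝ (⊤ : ℕ∞) ϖ)
    (hφd : ContDiff ℝ (⊤ : ℕ∞) φd) (hϖd : ContDiff ℝ (⊤ : ℕ∞) ϖd)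
    (hφs : tsupport φ ⊆ Metric.closedBall 0 R)
    (hϖs : tsupport ϖ ⊆ Metric.closedBall 0 R)
    (hφds : tsupport φd ⊆ Metric.closedBall 0 R)
    (hϖds : tsupport ϖd ⊆ Metric.closedBall 0 R)
    (f : E2 → AddCircle (2 * Real.pi) → ℝ)
    (F : E2 × ℝ → ℝ) (hF : ContDiff ℝ (⊤ : ℕ∞) F)
    (hfF : ∀ (x : E2) (θ : ℝ), f x ((θ : AddCircle (2 * Real.pi))) = F (x, θ))
    (hfs : ∀ x : E2, x ∉ Metric.closedBall (0 : E2) R → ∀ ω, f x ω = 0)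
    (m : Measure (AddCircle (2 * Real.pi))) [IsProbabilityMeasure m]
    (horth : ∀ j : Fin 2,
      ∫ x : E2, (2 * φd x * fderiv ℝ φ x (EuclideanSpace.single j 1)
        + (1/2) * Real.exp (-(4 * φ x)) * ϖd x * fderiv ℝ ϖ x (EuclideanSpace.single j 1)
        + ∫ ω, (f x ω)^2 * eDir j ω ∂m) = 0)
    (r : Fin 2 → E2 → ℝ)
    (hr : ∀ j, ContDiff ℝ (⊤ : ℕ∞) (r j))
    (hrs : ∀ j, tsupport (r j) ⊆ Metric.closedBall 0 (3 * R / 2))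
    (hdet : Matrix.det (Matrix.of fun i j : Fin 2 =>
        ∫ x, 2 * r j x * fderiv ℝ φ x (EuclideanSpace.single i 1)) ≠ 0) :
    ∃ Ω : ℕ → Fin 2 → ℝ,
      Tendsto Ω atTop (𝓝 0) ∧
      ∀ N : ℕ, 0 < N → ∀ j : Fin 2,
        ∫ x : E2, (2 * (φd x + Ω N 0 * r 0 x + Ω N 1 * r 1 x)
            * fderiv ℝ φ x (EuclideanSpace.single j 1)
          + (1/2) * Real.exp (-(4 * φ x)) * ϖd x * fderiv ℝ ϖ x (EuclideanSpace.single j 1)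
          + ∑ A ∈ Finset.range N,
              alphaCoef m N A * (f x (omegaPt N A))^2 * eDir j (omegaPt N A)) = 0 := by
  classical
  open Set StmtAux in
  have hπ : (0:ℝ) < 2 * Real.pi := by have := Real.pi_pos; linarith
  -- the pushforward measure on [0, 2π)
  set μ : Measure ℝ := m.map Tlift with hμdef
  have hμprob : IsProbabilityMeasure μ :=
    Measure.isProbabilityMeasure_map Tlift_measurable.aemeasurable
  have hμc : μ (Set.Ico (0:ℝ) (2 * Real.pi))ᶜ = 0 := map_compl_Ico m
  have hμae : ∀ᵐ θ ∂μ, θ ∈ Set.Ico (0:ℝ) (2 * Real.pi) := by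
    rw [ae_iff]
    have he : {θ : ℝ | ¬ θ ∈ Set.Ico (0:ℝ) (2 * Real.pi)}
        = (Set.Ico (0:ℝ) (2 * Real.pi))ᶜ := rfl
    rw [he]; exact hμc
  -- derivatives
  set D : Fin 2 → E2 → ℝ := fun j x => fderiv ℝ φ x (EuclideanSpace.single j 1) with hD
  set Dv : Fin 2 → E2 → ℝ := fun j x => fderiv ℝ ϖ x (EuclideanSpace.single j 1) with hDv
  have hDcont : ∀ j, Continuous (D j) := fun j =>
    (hφ.continuous_fderiv (by simp)).clm_apply continuous_const
  have hDvcont : ∀ j, Continuous (Dv j) := fun j =>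
    (hϖ.continuous_fderiv (by simp)).clm_apply continuous_const
  -- the kernel K
  set K : Fin 2 → E2 × ℝ → ℝ :=
    fun j p => F p ^ 2 * (if j = 0 then Real.cos p.2 else Real.sin p.2) with hKdef
  have hKcont : ∀ j, Continuous (K j) := by
    intro j
    apply Continuous.mul ((hF.continuous).pow 2)
    by_cases h : j = 0 <;> simp [h] <;> fun_prop
  have hKf : ∀ (j : Fin 2) (x : E2) (θ : ℝ),
      (f x ((θ : ℝ) : AddCircle (2 * Real.pi)))^2 * eDir j ((θ : ℝ) : AddCircle (2 * Real.pi))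
        = K j (x, θ) := by
    intro j x θ
    rw [hfF, eDir_coe]
  have hKzero : ∀ (j : Fin 2) (x : E2), x ∉ Metric.closedBall (0:E2) R → ∀ θ : ℝ,
      K j (x, θ) = 0 := by
    intro j x hx θ
    rw [← hKf, hfs x hx]
    ring
  -- a uniform bound for K
  have hboundj : ∀ j : Fin 2, ∃ C : ℝ, 0 ≤ C ∧
      ∀ (x : E2) (θ : ℝ), θ ∈ Set.Icc (0:ℝ) (2 * Real.pi) → ‖K j (x, θ)‖ ≤ C := by
    intro j
    obtain ⟨C, hC⟩ := ((isCompact_closedBall (0:E2) R).prod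
      (isCompact_Icc (a := (0:ℝ)) (b := 2 * Real.pi))).exists_bound_of_continuousOn
      (hKcont j).continuousOn
    refine ⟨max C 0, le_max_right _ _, ?_⟩
    intro x θ hθ
    by_cases hx : x ∈ Metric.closedBall (0:E2) R
    · exact le_trans (hC (x, θ) (Set.mk_mem_prod hx hθ)) (le_max_left _ _)
    · rw [hKzero j x hx θ]; simp
  choose Cb hCb0 hCb using hboundj
  -- integrability of K in θ
  have hKint : ∀ (j : Fin 2) (x : E2), Integrable (fun θ => K j (x, θ)) μ := by
    intro j x
    refine Integrable.mono' (integrable_const (Cb j))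
      ((hKcont j).comp (Continuous.prodMk_right x)).aestronglyMeasurable ?_
    filter_upwards [hμae] with θ hθ
    exact hCb j x θ (Set.Ico_subset_Icc_self hθ)
  -- the limit function h
  set hLim : Fin 2 → E2 → ℝ := fun j x => ∫ θ, K j (x, θ) ∂μ with hLimdef
  have hm_eq : ∀ (j : Fin 2) (x : E2), ∫ ω, (f x ω)^2 * eDir j ω ∂m = hLim j x := by
    intro j x
    have hcont : Continuous fun θ : ℝ =>
        (f x ((θ : ℝ) : AddCircle (2 * Real.pi)))^2 * eDir j ((θ:ℝ) : AddCircle (2 * Real.pi)) := by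
      have : (fun θ : ℝ => (f x ((θ : ℝ) : AddCircle (2 * Real.pi)))^2
          * eDir j ((θ:ℝ) : AddCircle (2 * Real.pi))) = fun θ => K j (x, θ) := by
        funext θ; exact hKf j x θ
      rw [this]
      exact (hKcont j).comp (Continuous.prodMk_right x)
    rw [integral_circle_eq m _ hcont, hLimdef]
    exact integral_congr_ae (Filter.Eventually.of_forall fun θ => hKf j x θ)
  -- the discretized function g
  set g : Fin 2 → ℕ → E2 → ℝ := fun j N x =>
    ∑ A ∈ Finset.range N, alphaCoef m N A * K j (x, 2 * Real.pi * A / N) with hgdef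
  have hsum_eq : ∀ (j : Fin 2) (N : ℕ) (x : E2),
      (∑ A ∈ Finset.range N, alphaCoef m N A * (f x (omegaPt N A))^2 * eDir j (omegaPt N A))
        = g j N x := by
    intro j N x
    refine Finset.sum_congr rfl fun A _ => ?_
    rw [mul_assoc]
    congr 1
    exact hKf j x (2 * Real.pi * A / N)
  -- alphaCoef identification
  have halpha : ∀ N A : ℕ, A < N →
      alphaCoef m N A
        = (μ (Set.Ico (2 * Real.pi * A / N) (2 * Real.pi * (A + 1) / N))).toReal := by
    intro N A hAN
    have hN : (0:ℝ) < N := by exact_mod_cast Nat.lt_of_le_of_lt (Nat.zero_le A) hAN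
    have hb : 2 * Real.pi * (A + 1) / N ≤ 2 * Real.pi := by
      rw [div_le_iff₀ hN]
      have : ((A:ℝ) + 1) ≤ (N:ℝ) := by exact_mod_cast Nat.succ_le_of_lt hAN
      nlinarith
    unfold alphaCoef
    rw [image_Ico_eq (by positivity) hb, hμdef,
      Measure.map_apply Tlift_measurable measurableSet_Ico]
  -- continuity/support of g
  have hgcont : ∀ j N, Continuous (g j N) := by
    intro j N
    apply continuous_finset_sum
    intro A _
    exact continuous_const.mul ((hKcont j).comp (continuous_id.prodMk continuous_const))
  have hgzero : ∀ j N (x : E2), x ∉ Metric.closedBall (0:E2) R → g j N x = 0 := by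
    intro j N x hx
    simp only [hgdef]
    refine Finset.sum_eq_zero fun A _ => ?_
    rw [hKzero j x hx]
    ring
  have hgint : ∀ j N, Integrable (g j N) := fun j N =>
    integrable_of_csupport (hgcont j N) (hgzero j N)
  -- support/integrability of hLim
  have hhzero : ∀ j (x : E2), x ∉ Metric.closedBall (0:E2) R → hLim j x = 0 := by
    intro j x hx
    simp only [hLimdef]
    have : (fun θ => K j (x, θ)) = fun _ => (0:ℝ) := funext fun θ => hKzero j x hx θ
    rw [this, integral_zero]
  have hhmeas : ∀ j, AEStronglyMeasurable (hLim j) (volume : Measure E2) := by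
    intro j
    exact ((hKcont j).stronglyMeasurable.integral_prod_right').aestronglyMeasurable
  have hhbound : ∀ j (x : E2), ‖hLim j x‖ ≤ Cb j := by
    intro j x
    simp only [hLimdef]
    have : ‖∫ θ, K j (x, θ) ∂μ‖ ≤ Cb j * (μ Set.univ).toReal := by
      apply norm_integral_le_of_norm_le_const
      filter_upwards [hμae] with θ hθ
      exact hCb j x θ (Set.Ico_subset_Icc_self hθ)
    simpa [measure_univ] using this
  have hhint : ∀ j, Integrable (hLim j) := by
    intro j
    have hind : Integrable ((Metric.closedBall (0:E2) R).indicator (fun _ => Cb j)) :=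
      (integrable_indicator_iff (measurableSet_closedBall (x := (0:E2)) (ε := R))).mpr
        (integrableOn_const (isCompact_closedBall _ _).measure_lt_top.ne)
    refine Integrable.mono' hind (hhmeas j) ?_
    · refine Filter.Eventually.of_forall fun x => ?_
      by_cases hx : x ∈ Metric.closedBall (0:E2) R
      · rw [Set.indicator_of_mem hx]
        exact hhbound j x
      · rw [Set.indicator_of_notMem hx, hhzero j x hx]
        simp
  -- the base part
  set base : Fin 2 → E2 → ℝ := fun j x =>
    2 * φd x * D j x + (1/2) * Real.exp (-(4 * φ x)) * ϖd x * Dv j x with hbasedef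
  have hbasecont : ∀ j, Continuous (base j) := by
    intro j
    apply Continuous.add
    · exact (continuous_const.mul hφd.continuous).mul (hDcont j)
    · exact ((continuous_const.mul (Real.continuous_exp.comp
        (continuous_const.mul hφ.continuous).neg)).mul hϖd.continuous).mul (hDvcont j)
  have hbasezero : ∀ j (x : E2), x ∉ Metric.closedBall (0:E2) R → base j x = 0 := by
    intro j x hx
    have h1 : φd x = 0 := image_eq_zero_of_notMem_tsupport fun hc => hx (hφds hc)
    have h2 : ϖd x = 0 := image_eq_zero_of_notMem_tsupport fun hc => hx (hϖds hc)
    simp only [hbasedef]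
    rw [h1, h2]
    ring
  have hbaseint : ∀ j, Integrable (base j) := fun j =>
    integrable_of_csupport (hbasecont j) (hbasezero j)
  -- the r-terms
  have hrint : ∀ (k i : Fin 2), Integrable (fun x => 2 * r k x * D i x) := by
    intro k i
    apply integrable_of_csupport
      ((continuous_const.mul (hr k).continuous).mul (hDcont i)) (ρ := 3 * R / 2)
    intro x hx
    have h1 : r k x = 0 := image_eq_zero_of_notMem_tsupport fun hc => hx (hrs k hc)
    simp [h1]
  -- the orthogonality rephrased
  have horth' : ∀ j, ∫ x, (base j x + hLim j x) = 0 := by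
    intro j
    have : (fun x => base j x + hLim j x)
        = fun x => 2 * φd x * D j x
          + (1/2) * Real.exp (-(4 * φ x)) * ϖd x * Dv j x
          + ∫ ω, (f x ω)^2 * eDir j ω ∂m := by
      funext x
      rw [hm_eq j x, hbasedef]
    rw [this]
    exact horth j
  -- definition of b
  set b : ℕ → Fin 2 → ℝ := fun N j => ∫ x, (base j x + g j N x) with hbdef
  have hbsplit : ∀ N j, b N j = ∫ x, (g j N x - hLim j x) := by
    intro N j
    have hfe : (fun x => base j x + g j N x)
        = fun x => (base j x + hLim j x) + (g j N x - hLim j x) := by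
      funext x; ring
    have h1 : Integrable (fun x => base j x + hLim j x) := (hbaseint j).add (hhint j)
    have h2 : Integrable (fun x => g j N x - hLim j x) := (hgint j N).sub (hhint j)
    simp only [hbdef]
    rw [hfe, integral_add h1 h2, horth' j, zero_add]
  -- the key convergence
  have hconv : ∀ j, Tendsto (fun N => ∫ x, (g j N x - hLim j x)) atTop (𝓝 0) := by
    intro j
    rw [Metric.tendsto_atTop]
    intro ε hε
    set V : ℝ := (volume (Metric.closedBall (0:E2) R)).toReal with hVdef
    have hV0 : 0 ≤ V := ENNReal.toReal_nonneg
    set ε' : ℝ := ε / (2 * (V + 1)) with hε'def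
    have hε' : 0 < ε' := by positivity
    -- uniform continuity
    have hUC := (((isCompact_closedBall (0:E2) R).prod
      (isCompact_Icc (a := (0:ℝ)) (b := 2 * Real.pi)))).uniformContinuousOn_of_continuous
      (hKcont j).continuousOn
    rw [Metric.uniformContinuousOn_iff] at hUC
    obtain ⟨δ, hδ0, hδ⟩ := hUC ε' hε'
    refine ⟨⌈2 * Real.pi / δ⌉₊ + 1, fun N hN => ?_⟩
    have hN1 : 1 ≤ N := le_trans (Nat.le_add_left 1 _) hN
    have hNpos : (0:ℝ) < N := by exact_mod_cast hN1
    have hcδ : 2 * Real.pi / N < δ := by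
      rw [div_lt_iff₀ hNpos]
      have h1 : 2 * Real.pi / δ < N := by
        calc 2 * Real.pi / δ ≤ (⌈2 * Real.pi / δ⌉₊ : ℝ) := Nat.le_ceil _
        _ < N := by exact_mod_cast Nat.lt_of_lt_of_le (Nat.lt_succ_self _) hN
      calc 2 * Real.pi = 2 * Real.pi / δ * δ := by field_simp
      _ < N * δ := by apply mul_lt_mul_of_pos_right h1 hδ0
      _ = δ * N := by ring
    set c : ℝ := 2 * Real.pi / N with hcdef
    have hc0 : 0 ≤ c := by positivity
    have hcN : c * N = 2 * Real.pi := by rw [hcdef]; field_simp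
    have hce : ∀ A : ℕ, 2 * Real.pi * A / N = c * A := by intro A; rw [hcdef]; ring
    have hce' : ∀ A : ℕ, 2 * Real.pi * ((A:ℝ) + 1) / N = c * ((A + 1 : ℕ) : ℝ) := by
      intro A; rw [hcdef]; push_cast; ring
    have hdisj : (↑(Finset.range N) : Set ℕ).Pairwise
        (Function.onFun Disjoint fun A : ℕ => Set.Ico (c * A) (c * (A + 1 : ℕ))) :=
      (pairwise_disjoint_Ico c hc0).set_pairwise _
    have hmeas : ∀ A ∈ Finset.range N,
        MeasurableSet (Set.Ico (c * (A:ℝ)) (c * ((A + 1 : ℕ) : ℝ))) :=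
      fun A _ => measurableSet_Ico
    have hIint : ∀ (x : E2), ∀ A ∈ Finset.range N,
        IntegrableOn (fun θ => K j (x, θ)) (Set.Ico (c * (A:ℝ)) (c * ((A + 1 : ℕ) : ℝ))) μ :=
      fun x A _ => (hKint j x).integrableOn
    have hUnion : ⋃ A ∈ Finset.range N, Set.Ico (c * (A:ℝ)) (c * ((A + 1 : ℕ) : ℝ))
        = Set.Ico (0:ℝ) (2 * Real.pi) := by
      rw [iUnion_Ico_nat c hc0 N, hcN]
    -- pointwise bound
    have hpt : ∀ x : E2, ‖g j N x - hLim j x‖ ≤ ε' := by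
      intro x
      have hgx : g j N x = ∑ A ∈ Finset.range N,
          ∫ _ in Set.Ico (c * (A:ℝ)) (c * ((A + 1 : ℕ) : ℝ)), K j (x, c * A) ∂μ := by
        simp only [hgdef]
        refine Finset.sum_congr rfl fun A hA => ?_
        rw [halpha N A (Finset.mem_range.mp hA), hce A, hce' A, setIntegral_const,
          smul_eq_mul]
        rfl
      have hhx : hLim j x = ∑ A ∈ Finset.range N,
          ∫ θ in Set.Ico (c * (A:ℝ)) (c * ((A + 1 : ℕ) : ℝ)), K j (x, θ) ∂μ := by
        rw [← integral_biUnion_finset (Finset.range N) hmeas hdisj (hIint x), hUnion]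
        simp only [hLimdef]
        rw [setIntegral_congr_set (ae_eq_univ.mpr hμc), setIntegral_univ]
      have hdiffeq : g j N x - hLim j x = ∑ A ∈ Finset.range N,
          ∫ θ in Set.Ico (c * (A:ℝ)) (c * ((A + 1 : ℕ) : ℝ)),
            (K j (x, c * A) - K j (x, θ)) ∂μ := by
        rw [hgx, hhx, ← Finset.sum_sub_distrib]
        refine Finset.sum_congr rfl fun A hA => ?_
        rw [integral_sub (integrableOn_const (C := K j (x, c * A)) (measure_ne_top μ _))
          (hIint x A hA)]
      rw [hdiffeq]
      calc ‖∑ A ∈ Finset.range N,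
          ∫ θ in Set.Ico (c * (A:ℝ)) (c * ((A + 1 : ℕ) : ℝ)),
            (K j (x, c * A) - K j (x, θ)) ∂μ‖
          ≤ ∑ A ∈ Finset.range N,
            ‖∫ θ in Set.Ico (c * (A:ℝ)) (c * ((A + 1 : ℕ) : ℝ)),
              (K j (x, c * A) - K j (x, θ)) ∂μ‖ := norm_sum_le _ _
        _ ≤ ∑ A ∈ Finset.range N,
            ε' * (μ (Set.Ico (c * (A:ℝ)) (c * ((A + 1 : ℕ) : ℝ)))).toReal := by
            refine Finset.sum_le_sum fun A hA => ?_
            refine norm_setIntegral_le_of_norm_le_const (measure_lt_top μ _)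
              ?_
            intro θ hθ
            have hAN : A < N := Finset.mem_range.mp hA
            have hcA_mem : c * (A:ℝ) ∈ Set.Icc (0:ℝ) (2 * Real.pi) := by
              constructor
              · positivity
              · rw [← hcN]
                apply mul_le_mul_of_nonneg_left _ hc0
                exact_mod_cast le_of_lt hAN
            have hθ_mem : θ ∈ Set.Icc (0:ℝ) (2 * Real.pi) := by
              constructor
              · exact le_trans hcA_mem.1 hθ.1
              · refine le_trans (le_of_lt hθ.2) ?_
                rw [← hcN]
                apply mul_le_mul_of_nonneg_left _ hc0
                exact_mod_cast Nat.succ_le_of_lt hAN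
            by_cases hx : x ∈ Metric.closedBall (0:E2) R
            · have hmem1 : (x, c * (A:ℝ)) ∈
                  (Metric.closedBall (0:E2) R) ×ˢ (Set.Icc (0:ℝ) (2 * Real.pi)) :=
                Set.mk_mem_prod hx hcA_mem
              have hmem2 : (x, θ) ∈
                  (Metric.closedBall (0:E2) R) ×ˢ (Set.Icc (0:ℝ) (2 * Real.pi)) :=
                Set.mk_mem_prod hx hθ_mem
              have hdist : dist ((x, c * (A:ℝ)) : E2 × ℝ) (x, θ) < δ := by
                rw [Prod.dist_eq]
                simp only [dist_self]
                rw [max_lt_iff]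
                constructor
                · exact hδ0
                · rw [Real.dist_eq, abs_sub_comm, abs_of_nonneg (by linarith [hθ.1])]
                  have : θ < c * ((A:ℝ) + 1) := by
                    have := hθ.2; push_cast at this; linarith
                  calc θ - c * (A:ℝ) < c * ((A:ℝ) + 1) - c * A := by linarith
                  _ = c := by ring
                  _ < δ := hcδ
              have := hδ _ hmem1 _ hmem2 hdist
              rw [Real.dist_eq] at this
              exact le_of_lt (by simpa using this)
            · rw [hKzero j x hx, hKzero j x hx]
              simpa using le_of_lt hε'
        _ = ε' * ∑ A ∈ Finset.range N,
            (μ (Set.Ico (c * (A:ℝ)) (c * ((A + 1 : ℕ) : ℝ)))).toReal := by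
            rw [Finset.mul_sum]
        _ ≤ ε' * 1 := by
            apply mul_le_mul_of_nonneg_left _ (le_of_lt hε')
            rw [← ENNReal.toReal_sum (fun A _ => measure_ne_top μ _)]
            have : ∑ A ∈ Finset.range N, μ (Set.Ico (c * (A:ℝ)) (c * ((A + 1 : ℕ) : ℝ)))
                = μ (Set.Ico (0:ℝ) (2 * Real.pi)) := by
              rw [← hUnion]
              exact (measure_biUnion_finset hdisj fun A _ => measurableSet_Ico).symm
            rw [this]
            calc (μ (Set.Ico (0:ℝ) (2 * Real.pi))).toReal
                ≤ (μ Set.univ).toReal := by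
                  apply ENNReal.toReal_mono (measure_ne_top μ _)
                  exact measure_mono (Set.subset_univ _)
              _ = 1 := by simp [measure_univ]
        _ = ε' := mul_one ε'
    -- support of the difference
    have hz : ∀ x : E2, x ∉ Metric.closedBall (0:E2) R → g j N x - hLim j x = 0 := by
      intro x hx
      rw [hgzero j N x hx, hhzero j x hx, sub_zero]
    -- conclude
    have hmeasd : AEStronglyMeasurable (fun x => g j N x - hLim j x)
        (volume.restrict (Metric.closedBall (0:E2) R)) :=
      ((hgcont j N).aestronglyMeasurable.sub (hhmeas j)).restrict
    have hintegral_eq : ∫ x, (g j N x - hLim j x)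
        = ∫ x in Metric.closedBall (0:E2) R, (g j N x - hLim j x) :=
      (setIntegral_eq_integral_of_forall_compl_eq_zero hz).symm
    rw [Real.dist_eq, sub_zero, hintegral_eq]
    have hbnd : ‖∫ x in Metric.closedBall (0:E2) R, (g j N x - hLim j x)‖ ≤ ε' * V :=
      norm_setIntegral_le_of_norm_le_const (isCompact_closedBall _ _).measure_lt_top
        (fun x _ => hpt x)
    calc |∫ x in Metric.closedBall (0:E2) R, (g j N x - hLim j x)| ≤ ε' * V := hbnd
      _ < ε := by
          rw [hε'def]
          rw [div_mul_eq_mul_div, div_lt_iff₀ (by positivity)]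
          nlinarith
  have hbtend : ∀ j, Tendsto (fun N => b N j) atTop (𝓝 0) := by
    intro j
    have : (fun N => b N j) = fun N => ∫ x, (g j N x - hLim j x) := by
      funext N; exact hbsplit N j
    rw [this]
    exact hconv j
  -- the matrix
  set M : Matrix (Fin 2) (Fin 2) ℝ :=
    Matrix.of (fun i k : Fin 2 => ∫ x, 2 * r k x * D i x) with hMdef
  have hMunit : IsUnit M.det := isUnit_iff_ne_zero.mpr hdet
  set Ω : ℕ → Fin 2 → ℝ := fun N => (M⁻¹).mulVec (fun l => -(b N l)) with hΩdef
  have hMulVec : ∀ N, M.mulVec (Ω N) = fun l => -(b N l) := by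
    intro N
    simp only [hΩdef]
    rw [Matrix.mulVec_mulVec, Matrix.mul_nonsing_inv M hMunit, Matrix.one_mulVec]
  refine ⟨Ω, ?_, ?_⟩
  · rw [tendsto_pi_nhds]
    intro k
    have hexp : (fun N => Ω N k)
        = fun N => M⁻¹ k 0 * -(b N 0) + M⁻¹ k 1 * -(b N 1) := by
      funext N
      simp only [hΩdef, Matrix.mulVec, dotProduct, Fin.sum_univ_two]
    rw [hexp]
    have h0 : Tendsto (fun N => M⁻¹ k 0 * -(b N 0)) atTop (𝓝 0) := by
      have := (tendsto_const_nhds (x := M⁻¹ k 0) (f := atTop)).mul (hbtend 0).neg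
      simpa using this
    have h1 : Tendsto (fun N => M⁻¹ k 1 * -(b N 1)) atTop (𝓝 0) := by
      have := (tendsto_const_nhds (x := M⁻¹ k 1) (f := atTop)).mul (hbtend 1).neg
      simpa using this
    have := h0.add h1
    simpa using this
  · intro N hN j
    have hfe : (fun x : E2 => 2 * (φd x + Ω N 0 * r 0 x + Ω N 1 * r 1 x) * D j x
          + (1/2) * Real.exp (-(4 * φ x)) * ϖd x * Dv j x
          + ∑ A ∈ Finset.range N,
              alphaCoef m N A * (f x (omegaPt N A))^2 * eDir j (omegaPt N A))
        = fun x => (base j x + g j N x)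
            + (Ω N 0 * (2 * r 0 x * D j x) + Ω N 1 * (2 * r 1 x * D j x)) := by
      funext x
      rw [hsum_eq j N x, hbasedef]
      ring
    have hI1 : Integrable (fun x => base j x + g j N x) := (hbaseint j).add (hgint j N)
    have hI2 : Integrable (fun x => Ω N 0 * (2 * r 0 x * D j x)) := (hrint 0 j).const_mul _
    have hI3 : Integrable (fun x => Ω N 1 * (2 * r 1 x * D j x)) := (hrint 1 j).const_mul _
    have hI4 : Integrable (fun x => Ω N 0 * (2 * r 0 x * D j x)
        + Ω N 1 * (2 * r 1 x * D j x)) := hI2.add hI3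
    rw [hfe, integral_add hI1 hI4, integral_add hI2 hI3,
      integral_const_mul, integral_const_mul]
    have hMj : ∀ k : Fin 2, M j k = ∫ x, 2 * r k x * D j x := fun k => rfl
    have hmv := congrFun (hMulVec N) j
    simp only [Matrix.mulVec, dotProduct, Fin.sum_univ_two] at hmv
    have hbNj : b N j = ∫ x, (base j x + g j N x) := rfl
    rw [← hbNj, ← hMj 0, ← hMj 1]
    have key : M j 0 * Ω N 0 + M j 1 * Ω N 1 = -(b N j) := hmv
    linear_combination key

end
end

section
/- Let Ω ⊆ ℝ³ be open, let X : Ω → ℝ³ be a map (interpreted as a vector field), and for a differentiable function f : Ω → ℝ write X f (x) = Σ_{α=0}^{2} X^α(x) ∂_α f(x). Let φ, ϖ, F^φ, F^ϖ : Ω → ℝ be differentiable and χ : Ω → ℝ be any function, and assume that on Ω: 2 X F^φ + χ F^φ + e^{−4φ} (X ϖ) F^ϖ = 0 and 2 X F^ϖ + χ F^ϖ − 4 (X ϖ) F^φ − 4 (X φ) F^ϖ = 0. Then the function G = (F^φ)² + (e^{−4φ}/4) (F^ϖ)² satisfies X G + χ G = 0 on Ω. (Consequently F̄ = √G solves the null-dust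 transport equation 2 X F̄ + χ F̄ = 0 wherever F̄ ≠ 0.) -/
open MeasureTheory

noncomputable section

abbrev E3 := EuclideanSpace ℝ (Fin 3)

/-- The directional derivative `X f (x) = ∑_α X^α(x) ∂_α f(x)` along the vector field `X`. -/
def XD (X : E3 → Fin 3 → ℝ) (f : E3 → ℝ) (x : E3) : ℝ :=
  ∑ α, X x α * fderiv ℝ f x (EuclideanSpace.single α 1)

/-- If `F^φ, F^ϖ` satisfy the coupled split transport equations, then
`G = (F^φ)² + (e^{−4φ}/4)(F^ϖ)²` satisfies the null-dust transport equation `X G + χ G = 0`. -/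
theorem stmt5 (Ω : Set E3) (hΩ : IsOpen Ω) (X : E3 → Fin 3 → ℝ)
    (φ ϖ Fφ Fϖ χ : E3 → ℝ)
    (hφ : ∀ x ∈ Ω, DifferentiableAt ℝ φ x)
    (hϖ : ∀ x ∈ Ω, DifferentiableAt ℝ ϖ x)
    (hFφ : ∀ x ∈ Ω, DifferentiableAt ℝ Fφ x)
    (hFϖ : ∀ x ∈ Ω, DifferentiableAt ℝ Fϖ x)
    (heq1 : ∀ x ∈ Ω,
      2 * XD X Fφ x + χ x * Fφ x + Real.exp (-(4 * φ x)) * XD X ϖ x * Fϖ x = 0)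
    (heq2 : ∀ x ∈ Ω,
      2 * XD X Fϖ x + χ x * Fϖ x - 4 * XD X ϖ x * Fφ x - 4 * XD X φ x * Fϖ x = 0) :
    ∀ x ∈ Ω,
      XD X (fun y => (Fφ y)^2 + Real.exp (-(4 * φ y)) / 4 * (Fϖ y)^2) x
        + χ x * ((Fφ x)^2 + Real.exp (-(4 * φ x)) / 4 * (Fϖ x)^2) = 0 := by
  intro x hx
  have hφx := hφ x hx
  have hFφx := hFφ x hx
  have hFϖx := hFϖ x hx
  set dφ := fderiv ℝ φ x
  set dFφ := fderiv ℝ Fφ x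
  set dFϖ := fderiv ℝ Fϖ x
  have h1 : HasFDerivAt (fun y => (Fφ y)^2) ((2 * Fφ x) • dFφ) x := by
    have h := hFφx.hasFDerivAt.mul hFφx.hasFDerivAt
    simpa [pow_two, two_mul, add_smul, Pi.mul_def] using h
  have hg : HasFDerivAt (fun y => -(4 * φ y)) ((-4 : ℝ) • dφ) x := by
    have := ((hφx.hasFDerivAt).const_mul (4 : ℝ)).neg
    simpa [neg_smul, Pi.neg_def] using this
  have h2 : HasFDerivAt (fun y => Real.exp (-(4 * φ y)) / 4)
      ((4⁻¹ : ℝ) • (Real.exp (-(4 * φ x)) • ((-4 : ℝ) • dφ))) x := by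
    have := hg.exp.mul_const (4⁻¹ : ℝ)
    simpa [div_eq_mul_inv, smul_smul, mul_comm] using this
  have h3 : HasFDerivAt (fun y => (Fϖ y)^2) ((2 * Fϖ x) • dFϖ) x := by
    have h := hFϖx.hasFDerivAt.mul hFϖx.hasFDerivAt
    simpa [pow_two, two_mul, add_smul, Pi.mul_def] using h
  have h4 := h2.mul h3
  have hG := h1.add h4
  have hXG : XD X (fun y => (Fφ y)^2 + Real.exp (-(4 * φ y)) / 4 * (Fϖ y)^2) x
      = 2 * Fφ x * XD X Fφ x
        - Real.exp (-(4 * φ x)) * (Fϖ x)^2 * XD X φ x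
        + Real.exp (-(4 * φ x)) / 2 * Fϖ x * XD X Fϖ x := by
    unfold XD
    have hG' : HasFDerivAt (fun y => Fφ y ^ 2 + Real.exp (-(4 * φ y)) / 4 * Fϖ y ^ 2) _ x := hG
    rw [hG'.fderiv]
    simp only [ContinuousLinearMap.add_apply, ContinuousLinearMap.smul_apply, smul_eq_mul]
    rw [Finset.mul_sum, Finset.mul_sum, Finset.mul_sum]
    rw [← Finset.sum_sub_distrib, ← Finset.sum_add_distrib]
    apply Finset.sum_congr rfl
    intro α _
    ring
  have e1 := heq1 x hx
  have e2 := heq2 x hx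
  rw [hXG]
  linear_combination Fφ x * e1 + Real.exp (-(4 * φ x)) / 4 * Fϖ x * e2
end
end

section
/- Let N ≥ 3 be an odd integer, let c ≥ 1 be real, and for A ∈ {0,1,…,N−1} set ω_A = 2πA/N and a_A = (cN²)^A. Then for all A, B, C ∈ {0,1,…,N−1} with B ≠ C and for each sign s ∈ {−1,+1}, one has |a_B sin(ω_A − ω_B) + s · a_C sin(ω_A − ω_C)| ≥ 1/N. -/
open Real

lemma aux_half (N : ℕ) (hN : 3 ≤ N) (k : ℤ) (hk1 : 1 ≤ k) (hk2 : 2 * k ≤ (N : ℤ)) :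
    2 / (N : ℝ) ≤ Real.sin (Real.pi * k / N) := by
  have hNpos : (0:ℝ) < N := by positivity
  have hπ := Real.pi_pos
  have hk1' : (1:ℝ) ≤ (k:ℝ) := by exact_mod_cast hk1
  have hk2' : 2 * (k:ℝ) ≤ (N:ℝ) := by exact_mod_cast hk2
  have hle : Real.pi * k / N ≤ Real.pi / 2 := by
    rw [div_le_div_iff₀ hNpos (by norm_num)]
    nlinarith
  have h1 := Real.mul_le_sin (x := Real.pi * k / N) (by positivity) hle
  have h2 : 2 / Real.pi * (Real.pi * k / N) = 2 * k / N := by field_simp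
  rw [h2] at h1
  refine le_trans ?_ h1
  gcongr
  linarith

lemma aux_sin1 (N : ℕ) (hN : 3 ≤ N) (k : ℤ) (hk1 : 1 ≤ k) (hk2 : k ≤ (N : ℤ) - 1) :
    2 / (N : ℝ) ≤ Real.sin (Real.pi * k / N) := by
  rcases le_or_gt (2 * k) (N : ℤ) with h | h
  · exact aux_half N hN k hk1 h
  · have hsym : Real.sin (Real.pi * k / N) = Real.sin (Real.pi * (((N:ℤ) - k : ℤ) : ℝ) / N) := by
      rw [← Real.sin_pi_sub]
      congr 1
      have hNpos : (0:ℝ) < N := by positivity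
      push_cast
      field_simp
    rw [hsym]
    exact aux_half N hN ((N:ℤ) - k) (by omega) (by omega)

lemma aux_sin2 (N : ℕ) (hN : 3 ≤ N) (hodd : Odd N) (m : ℤ) (hm : ¬ (N:ℤ) ∣ m) :
    2 / (N : ℝ) ≤ |Real.sin (2 * Real.pi * m / N)| := by
  have hNpos : (0:ℤ) < N := by positivity
  set r : ℤ := (2 * m) % N with hr
  have hr0 : 0 ≤ r := Int.emod_nonneg _ (by positivity)
  have hrN : r < N := Int.emod_lt_of_pos _ hNpos
  have hrne : r ≠ 0 := by
    intro h0
    have hdvd : (N:ℤ) ∣ 2 * m := Int.dvd_of_emod_eq_zero h0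
    have h2 : IsCoprime (N:ℤ) 2 := by
      have : Nat.Coprime N 2 := hodd.coprime_two_right
      exact_mod_cast Nat.isCoprime_iff_coprime.mpr this
    exact hm (h2.dvd_of_dvd_mul_left hdvd)
  have hdecomp : (2*m : ℤ) = N * ((2*m)/N) + r := (Int.mul_ediv_add_emod (2*m) N).symm
  set q : ℤ := (2*m)/N with hq
  have key : 2 * Real.pi * m / N = Real.pi * r / N + q * Real.pi := by
    have h' : (2*(m:ℝ)) = N * q + r := by exact_mod_cast hdecomp
    have hNpos' : (0:ℝ) < N := by positivity
    field_simp
    nlinarith [h', Real.pi_pos]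
  rw [key, Real.sin_add_int_mul_pi, abs_mul]
  have habs : |((-1:ℝ))^q| = 1 := by
    rcases Int.even_or_odd q with h | h
    · rw [h.neg_one_zpow]; norm_num
    · rw [h.neg_one_zpow]; norm_num
  rw [habs, one_mul]
  exact (aux_sin1 N hN r (by omega) (by omega)).trans (le_abs_self _)

lemma aux_diff (N : ℕ) (A B : ℕ) :
    2 * Real.pi * A / N - 2 * Real.pi * B / N = 2 * Real.pi * (((A:ℤ) - B : ℤ) : ℝ) / N := by
  push_cast
  ring

lemma aux_tri (a b : ℝ) : |b| - |a| ≤ |a + b| := by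
  have h1 : |b| = |a + b + (-a)| := by congr 1; ring
  have h2 := abs_add_le (a + b) (-a)
  rw [abs_neg] at h2
  linarith [h1 ▸ h2]

lemma aux_tri' (a b : ℝ) : |a| - |b| ≤ |a + b| := by
  have := aux_tri b a
  calc |a| - |b| ≤ |b + a| := aux_tri b a
    _ = |a + b| := by rw [add_comm]

set_option maxHeartbeats 1000000 in
/-- Lower bound on the signed combinations `a_B sin(ω_A − ω_B) ± a_C sin(ω_A − ω_C)` for the
rescaling constants `a_A = (cN²)^A` and the angles `ω_A = 2πA/N`, `N ≥ 3` odd. -/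
theorem stmt12 (N : ℕ) (hN : 3 ≤ N) (hodd : Odd N) (c : ℝ) (hc : 1 ≤ c)
    (A B C : ℕ) (hA : A < N) (hB : B < N) (hC : C < N) (hBC : B ≠ C)
    (s : ℝ) (hs : s = 1 ∨ s = -1) :
    1 / (N : ℝ) ≤
      |(c * (N:ℝ)^2)^B * Real.sin (2 * Real.pi * A / N - 2 * Real.pi * B / N)
        + s * (c * (N:ℝ)^2)^C * Real.sin (2 * Real.pi * A / N - 2 * Real.pi * C / N)| := by
  have hNpos : (0:ℝ) < N := by positivity
  have hN3 : (3:ℝ) ≤ N := by exact_mod_cast hN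
  have hbase : (1:ℝ) ≤ c * (N:ℝ)^2 := by nlinarith
  have hsabs : |s| = 1 := by rcases hs with h | h <;> simp [h]
  have hbig : ∀ D : ℕ, D < N → A ≠ D →
      2 / (N:ℝ) ≤ |Real.sin (2 * Real.pi * A / N - 2 * Real.pi * D / N)| := by
    intro D hD hAD
    rw [aux_diff]
    apply aux_sin2 N hN hodd
    intro hdvd
    have h0 : ((A:ℤ) - D) = 0 := by
      apply Int.eq_zero_of_abs_lt_dvd hdvd
      rw [abs_lt]
      omega
    omega
  have hzero : ∀ D : ℕ, A = D →
      Real.sin (2 * Real.pi * A / N - 2 * Real.pi * D / N) = 0 := by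
    intro D h
    rw [h, sub_self, Real.sin_zero]
  have hpow : ∀ D E : ℕ, D < E → (c * (N:ℝ)^2)^D * (N:ℝ)^2 ≤ (c * (N:ℝ)^2)^E := by
    intro D E hDE
    have hE : E = D + (E - D) := by omega
    rw [hE, pow_add]
    have h1 : (0:ℝ) ≤ (c * (N:ℝ)^2)^D := by positivity
    have h2 : (N:ℝ)^2 ≤ (c * (N:ℝ)^2)^(E - D) := by
      calc (N:ℝ)^2 ≤ c * (N:ℝ)^2 := by nlinarith
        _ ≤ (c * (N:ℝ)^2)^(E - D) := le_self_pow₀ hbase (by omega)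
    exact mul_le_mul_of_nonneg_left h2 h1
  -- generalize
  obtain ⟨aB, haBdef⟩ : ∃ x, x = (c * (N:ℝ)^2)^B := ⟨_, rfl⟩
  obtain ⟨aC, haCdef⟩ : ∃ x, x = (c * (N:ℝ)^2)^C := ⟨_, rfl⟩
  obtain ⟨X, hXdef⟩ : ∃ x, x = Real.sin (2 * Real.pi * A / N - 2 * Real.pi * B / N) := ⟨_, rfl⟩
  obtain ⟨Y, hYdef⟩ : ∃ x, x = Real.sin (2 * Real.pi * A / N - 2 * Real.pi * C / N) := ⟨_, rfl⟩
  rw [← haBdef, ← haCdef, ← hXdef, ← hYdef]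
  have haB : (1:ℝ) ≤ aB := haBdef ▸ one_le_pow₀ hbase
  have haC : (1:ℝ) ≤ aC := haCdef ▸ one_le_pow₀ hbase
  have hXle : |X| ≤ 1 := hXdef ▸ Real.abs_sin_le_one _
  have hYle : |Y| ≤ 1 := hYdef ▸ Real.abs_sin_le_one _
  have h2N : 1 / (N:ℝ) ≤ 2 / N := by gcongr <;> norm_num
  by_cases hAB : A = B
  · have hX0 : X = 0 := hXdef ▸ hzero B hAB
    have hAC : A ≠ C := fun h => hBC (hAB ▸ h ▸ rfl)
    have hYbig : 2 / (N:ℝ) ≤ |Y| := hYdef ▸ hbig C hC hAC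
    rw [hX0, mul_zero, zero_add, abs_mul, abs_mul, hsabs, one_mul,
      abs_of_nonneg (by linarith : (0:ℝ) ≤ aC)]
    calc 1 / (N:ℝ) ≤ 2 / N := h2N
      _ ≤ |Y| := hYbig
      _ = 1 * |Y| := (one_mul _).symm
      _ ≤ aC * |Y| := mul_le_mul_of_nonneg_right haC (abs_nonneg _)
  by_cases hAC : A = C
  · have hY0 : Y = 0 := hYdef ▸ hzero C hAC
    have hXbig : 2 / (N:ℝ) ≤ |X| := hXdef ▸ hbig B hB hAB
    rw [hY0, mul_zero, add_zero, abs_mul, abs_of_nonneg (by linarith : (0:ℝ) ≤ aB)]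
    calc 1 / (N:ℝ) ≤ 2 / N := h2N
      _ ≤ |X| := hXbig
      _ = 1 * |X| := (one_mul _).symm
      _ ≤ aB * |X| := mul_le_mul_of_nonneg_right haB (abs_nonneg _)
  have hXbig : 2 / (N:ℝ) ≤ |X| := hXdef ▸ hbig B hB hAB
  have hYbig : 2 / (N:ℝ) ≤ |Y| := hYdef ▸ hbig C hC hAC
  have h1 : |s * aC * Y| = aC * |Y| := by
    rw [abs_mul, abs_mul, hsabs, one_mul, abs_of_nonneg (by linarith : (0:ℝ) ≤ aC)]
  have h2 : |aB * X| = aB * |X| := by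
    rw [abs_mul, abs_of_nonneg (by linarith : (0:ℝ) ≤ aB)]
  have hN2 : (2:ℝ)/N * N^2 = 2 * N := by field_simp
  rcases Nat.lt_or_ge B C with hlt | hge
  · have hdom : aB * (N:ℝ)^2 ≤ aC := by rw [haBdef, haCdef]; exact hpow B C hlt
    have htri := aux_tri (aB * X) (s * aC * Y)
    rw [h1, h2] at htri
    have e1 : aB * (N:ℝ)^2 * (2/N) ≤ aC * |Y| := by
      calc aB * (N:ℝ)^2 * (2/N) ≤ aC * (2/N) := by
            apply mul_le_mul_of_nonneg_right hdom; positivity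
        _ ≤ aC * |Y| := mul_le_mul_of_nonneg_left hYbig (by linarith)
    have e2 : aB * |X| ≤ aB := by nlinarith [abs_nonneg X]
    have e3 : aB * (N:ℝ)^2 * (2/N) = aB * (2 * N) := by field_simp
    have e4 : 2*(N:ℝ) - 1 ≤ aB * (2*N) - aB := by nlinarith
    have hNinv : 1 / (N:ℝ) ≤ 1 := by rw [div_le_one hNpos]; linarith
    linarith
  · have hlt : C < B := by omega
    have hdom : aC * (N:ℝ)^2 ≤ aB := by rw [haBdef, haCdef]; exact hpow C B hlt
    have htri := aux_tri' (aB * X) (s * aC * Y)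
    rw [h1, h2] at htri
    have e1 : aC * (N:ℝ)^2 * (2/N) ≤ aB * |X| := by
      calc aC * (N:ℝ)^2 * (2/N) ≤ aB * (2/N) := by
            apply mul_le_mul_of_nonneg_right hdom; positivity
        _ ≤ aB * |X| := mul_le_mul_of_nonneg_left hXbig (by linarith)
    have e2 : aC * |Y| ≤ aC := by nlinarith [abs_nonneg Y]
    have e3 : aC * (N:ℝ)^2 * (2/N) = aC * (2 * N) := by field_simp
    have e4 : 2*(N:ℝ) - 1 ≤ aC * (2*N) - aC := by nlinarith
    have hNinv : 1 / (N:ℝ) ≤ 1 := by rw [div_le_one hNpos]; linarith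
    linarith
end
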